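/- With the setup of weighted assignments (positive literal weights, multiplicative aggregation, best(A) = max of the two polarity weights), if a partial assignment μ satisfies w(μ) · I_max(μ) < θ for a real threshold θ, then every total assignment η extending μ satisfies w(η) < θ. In particular, no model of weight at least θ extends μ. -/

import Mathlib

open Finset

theorem Bool.apply_le_max_true_false {α : Type*} [LinearOrder α] (f : Bool → α) (b : Bool) :
    f b ≤ max (f true) (f false) := by
  cases b
  · exact le_max_right _ _
  · exact le_max_left _ _

theorem Finset.prod_le_prod_mul_prod_compl {ι R : Type*} [Fintype ι] [DecidableEq ι]
    [CommMonoidWithZero R] [PartialOrder R] [ZeroLEOneClass R] [PosMulMono R]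
    {f g h : ι → R} (S : Finset ι) (hf : ∀ i, 0 ≤ f i) (hS : ∀ i ∈ S, f i = g i)
    (hSc : ∀ i ∈ Sᶜ, f i ≤ h i) :
    ∏ i, f i ≤ (∏ i ∈ S, g i) * ∏ i ∈ Sᶜ, h i := by
  rw [← prod_mul_prod_compl S f, prod_congr rfl hS]
  have hg : 0 ≤ ∏ i ∈ S, g i := prod_nonneg fun i hi => hS i hi ▸ hf i
  exact mul_le_mul_of_nonneg_left (prod_le_prod (fun i _ => hf i) hSc) hg

/-- If w(μ) · I_max(μ) < θ then every total extension η of μ has w(η) < θ. -/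
theorem weight_pruning_sound {V : Type*} [Fintype V] [DecidableEq V]
    (w : V → Bool → ℝ) (hw : ∀ v b, 0 < w v b)
    (S : Finset V) (μ : V → Bool) (θ : ℝ)
    (hbound : (∏ v ∈ S, w v (μ v)) * (∏ v ∈ Sᶜ, max (w v true) (w v false)) < θ) :
    ∀ η : V → Bool, (∀ v ∈ S, η v = μ v) → (∏ v, w v (η v)) < θ := by
  intro η hη
  calc ∏ v, w v (η v)
      ≤ (∏ v ∈ S, w v (μ v)) * ∏ v ∈ Sᶜ, max (w v true) (w v false) :=
        prod_le_prod_mul_prod_compl S (fun v => (hw v _).le) (fun v hv => by rw [hη v hv])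
          (fun v _ => Bool.apply_le_max_true_false (w v) (η v))
    _ < θ := hbound
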